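/- Under the restricted eigenvalue condition with constant φ₀² and the event λ ≥ 2‖Xᵀδ‖_∞/n, the Lasso estimator γ̂ for the model y = Xγ* + δ satisfies the ℓ₁ error bound ‖γ̂ − γ*‖₁ ≤ 16 λ s₀ / φ₀², where s₀ = |supp(γ*)|. -/

import Mathlib

/-!
Write `Δ = γ̂ - γ*`. Comparing the Lasso objective at `γ̂` and at `γ*` gives the basic inequality
`‖XΔ‖² ≤ 2 δᵀXΔ + 2nλ (‖γ*‖₁ - ‖γ̂‖₁)`. The noise term is at most `nλ ‖Δ‖₁` by the choice of `λ`,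
and since `γ*` lives on `S₀` the penalty difference is at most `‖Δ_{S₀}‖₁ - ‖Δ_{S₀ᶜ}‖₁`. Hence
`‖XΔ‖² + nλ ‖Δ_{S₀ᶜ}‖₁ ≤ 3nλ ‖Δ_{S₀}‖₁`: `Δ` lies in the cone of the restricted eigenvalue
condition, and `‖XΔ‖² ≤ 3nλ ‖Δ_{S₀}‖₁`. Cauchy–Schwarz and the restricted eigenvalue condition give
`‖Δ_{S₀}‖₁² ≤ s₀ ‖Δ_{S₀}‖₂² ≤ 3λ s₀ ‖Δ_{S₀}‖₁ / φ₀²`, so `‖Δ‖₁ ≤ 4 ‖Δ_{S₀}‖₁ ≤ 12 λ s₀ / φ₀²`.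
-/

open Matrix Finset

theorem sum_abs_le_card_mul_of_sum_sq_le {ι : Type*} {S : Finset ι} {Δ : ι → ℝ} {K : ℝ}
    (hK : 0 ≤ K) (h : ∑ j ∈ S, Δ j ^ 2 ≤ K * ∑ j ∈ S, |Δ j|) : ∑ j ∈ S, |Δ j| ≤ #S * K := by
  set a := ∑ j ∈ S, |Δ j|
  have ha : 0 ≤ a := sum_nonneg fun _ _ => abs_nonneg _
  have hCS : a ^ 2 ≤ #S * ∑ j ∈ S, Δ j ^ 2 := by
    simpa only [sq_abs] using sq_sum_le_card_mul_sum_sq (s := S) (f := fun j => |Δ j|)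
  have hsq : a * a ≤ (#S * K) * a := by
    nlinarith [mul_le_mul_of_nonneg_left h (Nat.cast_nonneg (α := ℝ) #S)]
  have hSK : 0 ≤ (#S : ℝ) * K := by positivity
  nlinarith

section

variable {ι : Type*} [Fintype ι]

theorem dotProduct_le_mul_sum_abs {u v : ι → ℝ} {c : ℝ} (hu : ∀ j, |u j| ≤ c) :
    u ⬝ᵥ v ≤ c * ∑ j, |v j| := by
  rw [mul_sum]
  refine sum_le_sum fun j _ => ?_
  calc u j * v j ≤ |u j| * |v j| := abs_mul (u j) (v j) ▸ le_abs_self _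
    _ ≤ c * |v j| := mul_le_mul_of_nonneg_right (hu j) (abs_nonneg _)

theorem sum_abs_sub_sum_abs_le_of_eq_zero_of_notMem [DecidableEq ι] (S : Finset ι)
    {u v : ι → ℝ} (hu : ∀ j ∉ S, u j = 0) :
    ∑ j, |u j| - ∑ j, |v j| ≤ ∑ j ∈ S, |v j - u j| - ∑ j ∈ Sᶜ, |v j - u j| := by
  have hon : ∑ j ∈ S, |u j| - ∑ j ∈ S, |v j| ≤ ∑ j ∈ S, |v j - u j| := by
    rw [← sum_sub_distrib]
    exact sum_le_sum fun j _ => abs_sub_comm (v j) (u j) ▸ abs_sub_abs_le_abs_sub _ _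
  have hoff_u : ∑ j ∈ Sᶜ, |u j| = 0 :=
    sum_eq_zero fun j hj => by rw [hu j (mem_compl.mp hj), abs_zero]
  have hoff_v : ∑ j ∈ Sᶜ, |v j - u j| = ∑ j ∈ Sᶜ, |v j| :=
    sum_congr rfl fun j hj => by rw [hu j (mem_compl.mp hj), sub_zero]
  rw [← sum_add_sum_compl S, ← sum_add_sum_compl S fun j => |v j|]
  linarith

end

section Lasso

variable {m ι : Type*} [Fintype m] [Fintype ι] (X : Matrix m ι ℝ) (δ : m → ℝ)
  {γs γh : ι → ℝ} {lam N : ℝ}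

theorem lasso_basic_inequality (hN : 0 < N)
    (hmin : 1 / (2 * N) * ∑ i, ((X *ᵥ γs + δ) i - (X *ᵥ γh) i) ^ 2 + lam * ∑ j, |γh j| ≤
      1 / (2 * N) * ∑ i, ((X *ᵥ γs + δ) i - (X *ᵥ γs) i) ^ 2 + lam * ∑ j, |γs j|) :
    ∑ i, (X *ᵥ (γh - γs)) i ^ 2 ≤
      2 * (δ ⬝ᵥ X *ᵥ (γh - γs)) + 2 * N * lam * (∑ j, |γs j| - ∑ j, |γh j|) := by
  have hexpand : ∑ i, ((X *ᵥ γs + δ) i - (X *ᵥ γh) i) ^ 2 =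
      ∑ i, δ i ^ 2 - 2 * (δ ⬝ᵥ X *ᵥ (γh - γs)) + ∑ i, (X *ᵥ (γh - γs)) i ^ 2 := by
    simp only [mulVec_sub, dotProduct, Pi.add_apply, Pi.sub_apply, mul_sum, ← sum_sub_distrib,
      ← sum_add_distrib]
    exact sum_congr rfl fun i _ => by ring
  have hnoise : ∑ i, ((X *ᵥ γs + δ) i - (X *ᵥ γs) i) ^ 2 = ∑ i, δ i ^ 2 := by
    simp only [Pi.add_apply, add_sub_cancel_left]
  rw [hexpand, hnoise] at hmin
  have h2N : 0 < 2 * N := by positivity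
  rw [← sub_nonneg] at hmin ⊢
  have key := mul_nonneg h2N.le hmin
  field_simp at key
  linarith

theorem lasso_cone_inequality [DecidableEq ι] (S : Finset ι) (hN : 0 < N) (hlam0 : 0 ≤ lam)
    (hγs : ∀ j ∉ S, γs j = 0) (hlam : ∀ j, 2 * |δ ⬝ᵥ fun i => X i j| / N ≤ lam)
    (hmin : 1 / (2 * N) * ∑ i, ((X *ᵥ γs + δ) i - (X *ᵥ γh) i) ^ 2 + lam * ∑ j, |γh j| ≤
      1 / (2 * N) * ∑ i, ((X *ᵥ γs + δ) i - (X *ᵥ γs) i) ^ 2 + lam * ∑ j, |γs j|) :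
    ∑ i, (X *ᵥ (γh - γs)) i ^ 2 + N * lam * ∑ j ∈ Sᶜ, |γh j - γs j| ≤
      N * lam * (3 * ∑ j ∈ S, |γh j - γs j|) := by
  have hbasic := lasso_basic_inequality X δ hN hmin
  have hnoise : δ ⬝ᵥ X *ᵥ (γh - γs) ≤ N * lam / 2 * ∑ j, |γh j - γs j| := by
    rw [dotProduct_mulVec]
    refine dotProduct_le_mul_sum_abs fun j => ?_
    have : 2 * |(δ ᵥ* X) j| ≤ lam * N := (div_le_iff₀ hN).mp (hlam j)
    exact (le_div_iff₀' two_pos).mpr (by linarith)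
  have hpenalty := mul_le_mul_of_nonneg_left
    (sum_abs_sub_sum_abs_le_of_eq_zero_of_notMem S (v := γh) hγs)
    (by positivity : 0 ≤ 2 * N * lam)
  rw [← sum_add_sum_compl S] at hnoise
  linarith

end Lasso

theorem stmt9_general {n p : ℕ} (hn : 0 < n) (X : Matrix (Fin n) (Fin p) ℝ)
    (γs : Fin p → ℝ) (S0 : Finset (Fin p)) (hS0 : S0 = Finset.univ.filter (fun j => γs j ≠ 0))
    (s0 : ℕ) (hs0 : S0.card = s0)
    (δ : Fin n → ℝ) (y : Fin n → ℝ) (hy : y = X.mulVec γs + δ)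
    (φ0 : ℝ)
    (hRE : ∀ Δ : Fin p → ℝ, (∑ j ∈ S0ᶜ, |Δ j|) ≤ 3 * ∑ j ∈ S0, |Δ j| →
      (∑ j ∈ S0, (Δ j) ^ 2) ≤ (1 / (n * φ0 ^ 2)) * ∑ i, (X.mulVec Δ i) ^ 2)
    (lam : ℝ) (hlampos : 0 < lam)
    (hlam : ∀ j, 2 * |δ ⬝ᵥ fun i => X i j| / n ≤ lam)
    (γh : Fin p → ℝ)
    (hmin : ∀ γ : Fin p → ℝ,
      (1 / (2 * n)) * (∑ i, (y i - X.mulVec γh i) ^ 2) + lam * ∑ j, |γh j| ≤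
      (1 / (2 * n)) * (∑ i, (y i - X.mulVec γ i) ^ 2) + lam * ∑ j, |γ j|) :
    ∑ j, |γh j - γs j| ≤ 16 * lam * s0 / φ0 ^ 2 := by
  subst hy hs0
  have hn' : (0 : ℝ) < n := Nat.cast_pos.mpr hn
  have hnlam : 0 < n * lam := mul_pos hn' hlampos
  have hγs : ∀ j ∉ S0, γs j = 0 := by simp [hS0]
  have hcone := lasso_cone_inequality X δ S0 hn' hlampos.le hγs hlam (hmin γs)
  set a := ∑ j ∈ S0, |γh j - γs j|
  set b := ∑ j ∈ S0ᶜ, |γh j - γs j|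
  set Q := ∑ i, (X *ᵥ (γh - γs)) i ^ 2
  have hQ : 0 ≤ Q := sum_nonneg fun _ _ => sq_nonneg _
  have hb : 0 ≤ b := sum_nonneg fun _ _ => abs_nonneg _
  have hba : b ≤ 3 * a := le_of_mul_le_mul_left (by linarith) hnlam
  have hQa : Q ≤ n * lam * (3 * a) := by linarith [mul_nonneg hnlam.le hb]
  have ha : a ≤ #S0 * (1 / (n * φ0 ^ 2) * (n * lam * 3)) :=
    sum_abs_le_card_mul_of_sum_sq_le (by positivity) <| (hRE (γh - γs) hba).trans <| by
      rw [mul_assoc _ _ a, mul_assoc (n * lam) 3 a]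
      exact mul_le_mul_of_nonneg_left hQa (by positivity)
  calc ∑ j, |γh j - γs j| = a + b := (sum_add_sum_compl S0 _).symm
    _ ≤ 4 * (#S0 * (1 / (n * φ0 ^ 2) * (n * lam * 3))) := by linarith
    _ = 12 * lam * #S0 / φ0 ^ 2 := by
      rw [one_div_mul_eq_div, mul_assoc (n : ℝ) lam 3, mul_div_mul_left _ _ hn'.ne']
      ring
    _ ≤ 16 * lam * #S0 / φ0 ^ 2 := by gcongr; norm_num

/-- Under the restricted eigenvalue condition and λ ≥ 2‖Xᵀδ‖_∞/n, the Lasso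
estimator for y = Xγ* + δ satisfies ‖γ̂ − γ*‖₁ ≤ 16 λ s₀ / φ₀². -/
theorem stmt9 {n p : ℕ} (hn : 0 < n) (X : Matrix (Fin n) (Fin p) ℝ)
    (γs : Fin p → ℝ) (S0 : Finset (Fin p)) (hS0 : S0 = Finset.univ.filter (fun j => γs j ≠ 0))
    (s0 : ℕ) (hs0 : S0.card = s0)
    (δ : Fin n → ℝ) (y : Fin n → ℝ) (hy : y = X.mulVec γs + δ)
    (φ0 : ℝ) (hφ0 : 0 < φ0)
    (hRE : ∀ Δ : Fin p → ℝ, (∑ j ∈ S0ᶜ, |Δ j|) ≤ 3 * ∑ j ∈ S0, |Δ j| →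
      (∑ j ∈ S0, (Δ j) ^ 2) ≤ (1 / (n * φ0 ^ 2)) * ∑ i, (X.mulVec Δ i) ^ 2)
    (lam : ℝ) (hlampos : 0 < lam)
    (hlam : ∀ j, 2 * |δ ⬝ᵥ fun i => X i j| / n ≤ lam)
    (γh : Fin p → ℝ)
    (hmin : ∀ γ : Fin p → ℝ,
      (1 / (2 * n)) * (∑ i, (y i - X.mulVec γh i) ^ 2) + lam * ∑ j, |γh j| ≤
      (1 / (2 * n)) * (∑ i, (y i - X.mulVec γ i) ^ 2) + lam * ∑ j, |γ j|) :
    ∑ j, |γh j - γs j| ≤ 16 * lam * s0 / φ0 ^ 2 :=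
  stmt9_general hn X γs S0 hS0 s0 hs0 δ y hy φ0 hRE lam hlampos hlam γh hmin
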